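/- With the vector fields v_i = ∂/∂n_i and f_j as in the standard monster chart with inverted positions IP, for all 0 ≤ i < j ≤ k the Lie derivative satisfies f_j(n_i) = b_{ij}, where b_{ij} = a_{i+1,j} if i+1 ∈ IP and b_{ij} = n_{i+1}·a_{i+1,j} otherwise, with a_{ij} = Π_{h ∈ IP, i+1 ≤ h ≤ j} n_h. -/

import Mathlib

/-- Polynomial functions on the standard chart `U × 𝔸^k`, with variable `0`
the coordinate `r₀` and variable `i+1` the coordinate `nᵢ`. -/
abbrev MPoly : Type := MvPolynomial ℕ ℚ

/-- A polynomial vector field, recorded by its (finitely many nonzero)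
components with respect to the basis `∂/∂r₀, ∂/∂n₀, ∂/∂n₁, …`. -/
abbrev VField : Type := ℕ →₀ MPoly

/-- The coordinate function `nᵢ`. -/
noncomputable def nvar (i : ℕ) : MPoly := MvPolynomial.X (i + 1)

/-- The Lie derivative `X(q)` of a function by a vector field. -/
noncomputable def vfApply (X : VField) (q : MPoly) : MPoly :=
  X.sum fun d p => p * MvPolynomial.pderiv d q

/-- The Lie bracket `[X,Y]` of two polynomial vector fields. -/
noncomputable def bracket (X Y : VField) : VField :=
  (X.sum fun d p => Y.sum fun c q => Finsupp.single c (p * MvPolynomial.pderiv d q)) -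
  (Y.sum fun d p => X.sum fun c q => Finsupp.single c (p * MvPolynomial.pderiv d q))

/-- The standard vertical vector field `vᵢ = ∂/∂nᵢ`. -/
noncomputable def vvf (i : ℕ) : VField := Finsupp.single (i + 1) 1

/-- The standard focal vector fields: `f₀ = ∂/∂r₀`, and
`fᵢ = nᵢ·fᵢ₋₁ + vᵢ₋₁` if `i ∈ IP` (inverted choice),
`fᵢ = fᵢ₋₁ + nᵢ·vᵢ₋₁` if `i ∉ IP` (ordinary choice). -/
noncomputable def fvf (IP : Finset ℕ) : ℕ → VField
  | 0 => Finsupp.single 0 1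
  | (i + 1) =>
      if i + 1 ∈ IP then nvar (i + 1) • fvf IP i + vvf i
      else fvf IP i + nvar (i + 1) • vvf i

/-- `a_{ij} = Π_{h ∈ IP, i+1 ≤ h ≤ j} n_h`. -/
noncomputable def apoly (IP : Finset ℕ) (i j : ℕ) : MPoly :=
  ∏ h ∈ (Finset.Icc (i + 1) j).filter (fun h => h ∈ IP), nvar h

/-- `b_{ij} = a_{i+1,j}` if `i+1 ∈ IP`, and `b_{ij} = n_{i+1}·a_{i+1,j}` otherwise. -/
noncomputable def bpoly (IP : Finset ℕ) (i j : ℕ) : MPoly :=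
  if i + 1 ∈ IP then apoly IP (i + 1) j else nvar (i + 1) * apoly IP (i + 1) j

/-!
`fⱼ(nᵢ)` is the `∂/∂nᵢ`-component of `fⱼ`. Since `fᵢ` only involves `∂/∂r₀, ∂/∂n₀, …, ∂/∂nᵢ₋₁`,
that component of `fᵢ₊₁` comes from `vᵢ` alone and equals `1` or `nᵢ₊₁`; each later step
`fⱼ₋₁ ↦ fⱼ` adds a multiple of `vⱼ₋₁`, which leaves the component alone, and multiplies it by
`nⱼ` exactly when `j ∈ IP`; `bᵢⱼ` obeys the same recursion.
-/

lemma vfApply_nvar (X : VField) (i : ℕ) : vfApply X (nvar i) = X (i + 1) := by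
  unfold vfApply nvar
  rw [Finsupp.sum_eq_single (i + 1)]
  · simp
  · intro d _ hd
    simp [MvPolynomial.pderiv_X, hd]
  · simp

lemma vvf_apply_of_ne {i d : ℕ} (h : d ≠ i + 1) : vvf i d = 0 :=
  Finsupp.single_eq_of_ne h

lemma fvf_succ_apply (IP : Finset ℕ) (n d : ℕ) :
    fvf IP (n + 1) d =
      if n + 1 ∈ IP then nvar (n + 1) * fvf IP n d + vvf n d
      else fvf IP n d + nvar (n + 1) * vvf n d := by
  rw [fvf]
  split_ifs <;> rfl

lemma fvf_apply_of_lt (IP : Finset ℕ) {j d : ℕ} (hd : j < d) : fvf IP j d = 0 := by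
  induction j with
  | zero => exact Finsupp.single_eq_of_ne hd.ne'
  | succ n ih =>
    rw [fvf_succ_apply, ih (by omega), vvf_apply_of_ne (by omega)]
    simp

lemma apoly_self (IP : Finset ℕ) (i : ℕ) : apoly IP i i = 1 := by
  simp [apoly]

lemma apoly_succ (IP : Finset ℕ) {i j : ℕ} (hij : i ≤ j) :
    apoly IP i (j + 1) = (if j + 1 ∈ IP then nvar (j + 1) else 1) * apoly IP i j := by
  unfold apoly
  rw [← Finset.insert_Icc_right_eq_Icc_add_one (by omega), Finset.filter_insert]
  split_ifs
  · exact Finset.prod_insert (by simp)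
  · rw [one_mul]

lemma bpoly_succ (IP : Finset ℕ) {i j : ℕ} (hij : i < j) :
    bpoly IP i (j + 1) = (if j + 1 ∈ IP then nvar (j + 1) else 1) * bpoly IP i j := by
  unfold bpoly
  rw [apoly_succ IP hij]
  split_ifs <;> ring

lemma fvf_apply_succ_eq_bpoly (IP : Finset ℕ) {i j : ℕ} (hij : i < j) :
    fvf IP j (i + 1) = bpoly IP i j := by
  induction j, hij using Nat.le_induction with
  | base =>
    rw [fvf_succ_apply, fvf_apply_of_lt IP (Nat.lt_succ_self i), bpoly, apoly_self]
    split_ifs <;> simp [vvf]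
  | succ n hin ih =>
    rw [fvf_succ_apply, vvf_apply_of_ne (by omega), bpoly_succ IP hin, ← ih]
    split_ifs <;> simp

theorem fvf_lieDeriv_nvar_general (IP : Finset ℕ)
    (i j : ℕ) (hij : i < j) :
    vfApply (fvf IP j) (nvar i) = bpoly IP i j := by
  rw [vfApply_nvar]
  exact fvf_apply_succ_eq_bpoly IP hij

/-- the Lie derivative satisfies `f_j(n_i) = b_{ij}` for
`0 ≤ i < j ≤ k`. -/
theorem fvf_lieDeriv_nvar (k : ℕ) (IP : Finset ℕ) (hIP : IP ⊆ Finset.Icc 1 k)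
    (i j : ℕ) (hij : i < j) (hjk : j ≤ k) :
    vfApply (fvf IP j) (nvar i) = bpoly IP i j :=
  fvf_lieDeriv_nvar_general IP i j hij
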